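/- arXiv:2403.02478 — 2 statements merged into one kernel-verified Lean document; each statement's English description precedes it below -/
import Mathlib

section
/- Let A and B be d×d canonical Permutation-Like Matrices such that the permutation-like component of A is the row PLM R_m^{(d−1)} (for some 1 ≤ m ≤ d−1) and B is not a leading CPLM (b_{1,1} = 0). Then A·B = R_{m+1}^{(d)}. -/
def IsPLM {k : Type*} [Field k] {n : Type*} [Fintype n] [DecidableEq n]
    (A : Matrix n n k) : Prop :=
  (∀ i j, A i j = 0 ∨ A i j = 1) ∧ ∀ j, ∃! i, A i j = 1

def rowPLM {k : Type*} [Field k] (d : ℕ) (m : Fin d) : Matrix (Fin d) (Fin d) k :=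
  fun i _ => if i = m then 1 else 0

theorem cplm_rowPLC_mul_nonleading {k : Type*} [Field k] {d : ℕ}
    (A B : Matrix (Fin (d + 1)) (Fin (d + 1)) k)
    (hA : IsPLM A) (hB : IsPLM B)
    (hAc : ∀ j : Fin (d + 1), j ≠ 0 → A 0 j = 0)
    (hBc : ∀ j : Fin (d + 1), j ≠ 0 → B 0 j = 0)
    (m : Fin d)
    (hAPLC : (fun i j : Fin d => A i.succ j.succ) = rowPLM d m)
    (hBnl : B 0 0 = 0) :
    A * B = rowPLM (d + 1) m.succ := by
  obtain ⟨hBe, hBcol⟩ := hB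
  have hB0 : ∀ j, B 0 j = 0 := by
    intro j
    rcases eq_or_ne j 0 with rfl | h
    · exact hBnl
    · exact hBc j h
  have hcol : ∀ j, ∑ i, B i j = 1 := by
    intro j
    obtain ⟨i0, hi0, huniq⟩ := hBcol j
    rw [Finset.sum_eq_single i0]
    · exact hi0
    · intro b _ hb
      rcases hBe b j with h | h
      · exact h
      · exact absurd (huniq b h) hb
    · simp
  have hA' : ∀ i' k' : Fin d, A i'.succ k'.succ = if i' = m then 1 else 0 := by
    intro i' k'
    have := congrFun (congrFun hAPLC i') k'
    simpa [rowPLM] using this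
  ext i j
  simp only [Matrix.mul_apply, rowPLM]
  refine Fin.cases ?_ ?_ i
  · rw [if_neg (Ne.symm (Fin.succ_ne_zero m))]
    apply Finset.sum_eq_zero
    intro x _
    rcases eq_or_ne x 0 with rfl | h
    · rw [hB0]; ring
    · rw [hAc x h]; ring
  · intro i'
    rw [Fin.sum_univ_succ, hB0, mul_zero, zero_add]
    simp only [hA']
    by_cases h : i' = m
    · subst h
      rw [if_pos rfl]
      simp only [if_pos rfl, one_mul]
      have := hcol j
      rw [Fin.sum_univ_succ, hB0, zero_add] at this
      exact this
    · rw [if_neg (fun hc => h (Fin.succ_injective _ hc))]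
      simp [if_neg h]
end

section
/- If A is a d×d CPLM with a_{1,1} = 0 whose permutation-like component is the row PLM R_m^{(d−1)}, then A² = R_{m+1}^{(d)}. -/
theorem cplm_rowPLC_sq {k : Type*} [Field k] {d : ℕ}
    (A : Matrix (Fin (d + 1)) (Fin (d + 1)) k)
    (hA : IsPLM A)
    (hAc : ∀ j : Fin (d + 1), j ≠ 0 → A 0 j = 0)
    (hA0 : A 0 0 = 0) (m : Fin d)
    (hAPLC : (fun i j : Fin d => A i.succ j.succ) = rowPLM d m) :
    A ^ 2 = rowPLM (d + 1) m.succ := by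
  have hrow0 : ∀ j, A 0 j = 0 := by
    intro j; by_cases h : j = 0
    · subst h; exact hA0
    · exact hAc j h
  have hsucc : ∀ (i j : Fin d), A i.succ j.succ = if i = m then (1:k) else 0 := by
    intro i j
    have := congrFun (congrFun hAPLC i) j
    simpa [rowPLM] using this
  obtain ⟨hentries, hcol⟩ := hA
  obtain ⟨i₀, hi₀, hiu⟩ := hcol 0
  have hcol0 : ∀ i, i ≠ i₀ → A i 0 = 0 := by
    intro i hi
    rcases hentries i 0 with h | h
    · exact h
    · exact absurd (hiu i h) hi
  have h0 : i₀ ≠ 0 := by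
    intro h; subst h; rw [hA0] at hi₀; exact zero_ne_one hi₀
  obtain ⟨t₀, ht₀⟩ := Fin.exists_succ_eq.mpr h0
  have hcolsum : (∑ t : Fin d, A t.succ 0) = 1 := by
    rw [Finset.sum_eq_single t₀]
    · rw [ht₀]; exact hi₀
    · intro b _ hb
      exact hcol0 _ (fun h => hb (Fin.succ_injective _ (h.trans ht₀.symm)))
    · simp
  ext i j
  rw [sq, Matrix.mul_apply]
  rcases Fin.eq_zero_or_eq_succ i with rfl | ⟨i', rfl⟩
  · simp [hrow0, rowPLM, (Fin.succ_ne_zero m).symm]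
  · by_cases him : i' = m
    · subst him
      rw [Fin.sum_univ_succ, hrow0, mul_zero, zero_add]
      have hterm : ∀ t : Fin d, A i'.succ t.succ * A t.succ j = A t.succ j := by
        intro t; rw [hsucc]; simp
      simp_rw [hterm]
      rcases Fin.eq_zero_or_eq_succ j with rfl | ⟨j', rfl⟩
      · rw [hcolsum]; simp [rowPLM]
      · simp_rw [hsucc]
        simp [rowPLM]
    · have hrowi : ∀ l, A i'.succ l * A l j = 0 := by
        intro l
        rcases Fin.eq_zero_or_eq_succ l with rfl | ⟨l', rfl⟩
        · rw [hrow0, mul_zero]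
        · rw [hsucc]; simp [him]
      have hne : i'.succ ≠ m.succ := fun h => him (Fin.succ_injective _ h)
      simp [hrowi, rowPLM, hne]
end
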